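/- arXiv:2307.12768 — 10 statements merged into one kernel-verified Lean document; each statement's English description precedes it below -/
import Mathlib

section
/- Let N ≥ 1 and let z_0, …, z_N, p_1, …, p_N be complex numbers that are pairwise distinct (the z's pairwise distinct, the p's pairwise distinct, and no z equals a p). Then det A = (∑_{α=0}^{N} z_α − ∑_{j=1}^{N} p_j) · det B, where A and B are the bordered Cauchy matrices defined in the context. -/
/-!
With `g = ∏ (X - z k)` and `q = ∏ (X - p j)`, the partial fraction expansion
`g / q = X - (∑ z - ∑ p) + ∑ λ j / (X - p j)` (the polynomial part is read off from the two top
coefficients of `g` and `q`) vanishes at every `z k`. Hence `u = (1, λ)` solves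
`A u = (∑ z - ∑ p) • 1`, and Cramer's rule for the first coordinate of `u` gives
`det A = det A * u 0 = (∑ z - ∑ p) * det B`.
-/

open Polynomial Finset

namespace Matrix

variable {n α : Type*} [Fintype n] [DecidableEq n] [CommRing α]

theorem cramer_mulVec (A : Matrix n n α) (x : n → α) : A.cramer (A *ᵥ x) = A.det • x := by
  rw [cramer_eq_adjugate_mulVec, mulVec_mulVec, adjugate_mul, smul_mulVec, one_mulVec]

theorem det_mul_apply_eq_det_updateCol_mulVec (A : Matrix n n α) (x : n → α) (i : n) :
    A.det * x i = (A.updateCol i (A *ᵥ x)).det := by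
  rw [← cramer_apply, cramer_mulVec, Pi.smul_apply, smul_eq_mul]

end Matrix

namespace Polynomial

theorem Monic.degree_sub_lt_of_nextCoeff_eq {R : Type*} [Ring R] {f g : R[X]} {n : ℕ}
    (hf : f.Monic) (hg : g.Monic) (hfn : f.natDegree = n + 1) (hgn : g.natDegree = n + 1)
    (h : f.nextCoeff = g.nextCoeff) : (f - g).degree < n := by
  rw [degree_lt_iff_coeff_zero]
  intro m hm
  rw [coeff_sub, sub_eq_zero]
  obtain rfl | hnm := (show n ≤ m by exact_mod_cast hm).eq_or_lt
  · rwa [nextCoeff_of_natDegree_pos (by omega), nextCoeff_of_natDegree_pos (by omega), hfn, hgn]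
      at h
  obtain rfl | hnm := (Nat.add_one_le_of_lt hnm).eq_or_lt
  · rw [← hfn, hf.coeff_natDegree, hfn, ← hgn, hg.coeff_natDegree]
  · rw [coeff_eq_zero_of_natDegree_lt (by omega), coeff_eq_zero_of_natDegree_lt (by omega)]

end Polynomial

namespace Lagrange

variable {F ι κ : Type*} [Field F] {s : Finset ι} {t : Finset κ} {v : ι → F} {x : κ → F}

theorem degree_nodal_sub_X_sub_C_mul_nodal_lt (hcard : #t = #s + 1) :
    (nodal t x - (X - C (∑ k ∈ t, x k - ∑ i ∈ s, v i)) * nodal s v).degree < (#s : WithBot ℕ) := by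
  refine nodal_monic.degree_sub_lt_of_nextCoeff_eq ((monic_X_sub_C _).mul nodal_monic) ?_ ?_ ?_
  · rw [natDegree_nodal, hcard]
  · rw [(monic_X_sub_C _).natDegree_mul nodal_monic, natDegree_X_sub_C, natDegree_nodal, add_comm]
  · rw [(monic_X_sub_C _).nextCoeff_mul nodal_monic, nextCoeff_X_sub_C, nodal, nodal,
      prod_X_sub_C_nextCoeff, prod_X_sub_C_nextCoeff]
    ring

variable [DecidableEq ι]

theorem eval_nodal_eq_eval_nodal_mul_sub_add_sum (hvs : Set.InjOn v s) (hcard : #t = #s + 1)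
    {y : F} (hy : ∀ i ∈ s, y ≠ v i) :
    eval y (nodal t x) = eval y (nodal s v) * (y - (∑ k ∈ t, x k - ∑ i ∈ s, v i) +
      ∑ i ∈ s, (y - v i)⁻¹ * (nodalWeight s v i * eval (v i) (nodal t x))) := by
  set S := ∑ k ∈ t, x k - ∑ i ∈ s, v i
  set f := nodal t x - (X - C S) * nodal s v
  have hfv : ∀ i ∈ s, eval (v i) f = eval (v i) (nodal t x) := fun i hi => by
    simp [f, eval_nodal_at_node hi]
  have hf : eval y f = eval y (nodal s v) *
      ∑ i ∈ s, nodalWeight s v i * (y - v i)⁻¹ * eval (v i) (nodal t x) := by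
    rw [show f = _ from
      eq_interpolate_of_eval_eq _ hvs (degree_nodal_sub_X_sub_C_mul_nodal_lt hcard) hfv,
      eval_interpolate_not_at_node _ hy]
  have hfy : eval y f = eval y (nodal t x) - (y - S) * eval y (nodal s v) := by
    simp only [f, eval_sub, eval_mul, eval_X, eval_C]
  have hsum : ∑ i ∈ s, nodalWeight s v i * (y - v i)⁻¹ * eval (v i) (nodal t x) =
      ∑ i ∈ s, (y - v i)⁻¹ * (nodalWeight s v i * eval (v i) (nodal t x)) :=
    sum_congr rfl fun _ _ => by ring
  linear_combination hf - hfy + eval y (nodal s v) * hsum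

theorem sub_add_sum_inv_sub_mul_nodalWeight_eq_zero (hvs : Set.InjOn v s) (hcard : #t = #s + 1)
    {k : κ} (hk : k ∈ t) (hkv : ∀ i ∈ s, x k ≠ v i) :
    x k - (∑ l ∈ t, x l - ∑ i ∈ s, v i) +
      ∑ i ∈ s, (x k - v i)⁻¹ * (nodalWeight s v i * eval (v i) (nodal t x)) = 0 := by
  have h := eval_nodal_eq_eval_nodal_mul_sub_add_sum (x := x) hvs hcard hkv
  rw [eval_nodal_at_node hk, eq_comm, mul_eq_zero] at h
  exact h.resolve_left (eval_nodal_not_at_node hkv)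

end Lagrange

open Lagrange Matrix in
theorem bordered_cauchy_det_general (N : ℕ)
    (z : Fin (N + 1) → ℂ) (p : Fin N → ℂ)
    (hp : Function.Injective p)
    (hzp : ∀ k j, z k ≠ p j)
    (A B : Matrix (Fin (N + 1)) (Fin (N + 1)) ℂ)
    (hA : ∀ k, A k 0 = z k)
    (hA' : ∀ k (j : Fin N), A k j.succ = (z k - p j)⁻¹)
    (hB : ∀ k, B k 0 = 1)
    (hB' : ∀ k (j : Fin N), B k j.succ = (z k - p j)⁻¹) :
    A.det = ((∑ k, z k) - ∑ j, p j) * B.det := by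
  set S := (∑ k, z k) - ∑ j, p j
  set u : Fin (N + 1) → ℂ := Fin.cons 1 fun j => nodalWeight univ p j * eval (p j) (nodal univ z)
  have hAu : A *ᵥ u = S • fun _ => 1 := by
    funext k
    have h := sub_add_sum_inv_sub_mul_nodalWeight_eq_zero (s := univ) (t := univ) hp.injOn
      (by simp) (mem_univ k) fun j _ => hzp k j
    simp only [mulVec, dotProduct, Fin.sum_univ_succ, hA, hA', u, Fin.cons_zero, Fin.cons_succ,
      Pi.smul_apply, smul_eq_mul, mul_one]
    linear_combination h
  have hBA : B = A.updateCol 0 fun _ => 1 := by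
    ext k j
    cases j using Fin.cases <;> simp [hA', hB, hB']
  calc A.det = A.det * u 0 := by simp [u]
    _ = S * B.det := by rw [det_mul_apply_eq_det_updateCol_mulVec, hAu, det_updateCol_smul, hBA]

/-- Bordered Cauchy determinant identity: `det A = (∑ z − ∑ p) · det B`. -/
theorem bordered_cauchy_det (N : ℕ) (hN : 1 ≤ N)
    (z : Fin (N + 1) → ℂ) (p : Fin N → ℂ)
    (hz : Function.Injective z) (hp : Function.Injective p)
    (hzp : ∀ k j, z k ≠ p j)
    (A B : Matrix (Fin (N + 1)) (Fin (N + 1)) ℂ)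
    (hA : ∀ k, A k 0 = z k)
    (hA' : ∀ k (j : Fin N), A k j.succ = (z k - p j)⁻¹)
    (hB : ∀ k, B k 0 = 1)
    (hB' : ∀ k (j : Fin N), B k j.succ = (z k - p j)⁻¹) :
    A.det = ((∑ k, z k) - ∑ j, p j) * B.det :=
  bordered_cauchy_det_general N z p hp hzp A B hA hA' hB hB'
end

section
/- Let N ≥ 1 and let z_0, …, z_N, p_1, …, p_N be complex numbers that are pairwise distinct (the z's pairwise distinct, the p's pairwise distinct, and no z equals a p). Then det B ≠ 0, i.e. the bordered Cauchy matrix B is invertible. -/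
/-!
Multiplying `c + ∑ⱼ wⱼ / (x - pⱼ)` by `∏ⱼ (x - pⱼ)` gives a polynomial of degree at most `N`
whose leading coefficient is `c` and whose value at `pⱼ` is `wⱼ ∏_{i ≠ j} (pⱼ - pᵢ)`. A vector
`(c, w)` in the kernel of `B` makes this polynomial vanish at the `N + 1` points `z_k`, so it is
zero, and hence so are `c` and all the `wⱼ`.
-/

open Polynomial Finset Lagrange Function

section PartialFraction

variable {F ι : Type*} [Field F] [Fintype ι] [DecidableEq ι]

noncomputable def partialFractionNumerator (p : ι → F) (c : F) (w : ι → F) : F[X] :=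
  C c * nodal univ p + ∑ j, C (w j) * nodal (univ.erase j) p

variable (p : ι → F) (c : F) (w : ι → F)

lemma natDegree_partialFractionNumerator_le :
    (partialFractionNumerator p c w).natDegree ≤ Fintype.card ι := by
  refine natDegree_add_le_of_degree_le ?_ (natDegree_sum_le_of_forall_le _ _ fun j _ => ?_)
  · exact (natDegree_C_mul_le _ _).trans_eq (by rw [natDegree_nodal, card_univ])
  · exact (natDegree_C_mul_le _ _).trans
      (by rw [natDegree_nodal]; exact (card_erase_lt_of_mem (mem_univ j)).le)

lemma coeff_card_partialFractionNumerator :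
    (partialFractionNumerator p c w).coeff (Fintype.card ι) = c := by
  have hlead : (nodal univ p).coeff (Fintype.card ι) = 1 := by
    simpa [natDegree_nodal] using (nodal_monic (s := univ) (v := p)).coeff_natDegree
  have hlow (j : ι) : (nodal (univ.erase j) p).coeff (Fintype.card ι) = 0 :=
    coeff_eq_zero_of_natDegree_lt (by rw [natDegree_nodal]; exact card_erase_lt_of_mem (mem_univ j))
  simp [partialFractionNumerator, hlead, hlow]

lemma eval_partialFractionNumerator {x : F} (hx : ∀ j, x ≠ p j) :
    (partialFractionNumerator p c w).eval x =
      (nodal univ p).eval x * (c + ∑ j, w j / (x - p j)) := by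
  simp only [partialFractionNumerator, eval_add, eval_mul, eval_C, eval_finsetSum, mul_add,
    mul_sum]
  congr 1
  · ring
  · refine sum_congr rfl fun j _ => ?_
    rw [nodal_eq_mul_nodal_erase (mem_univ j), eval_mul, eval_sub, eval_X, eval_C]
    field_simp [sub_ne_zero.2 (hx j)]

lemma eval_node_partialFractionNumerator (j : ι) :
    (partialFractionNumerator p c w).eval (p j) = w j * (nodal (univ.erase j) p).eval (p j) := by
  simp only [partialFractionNumerator, eval_add, eval_mul, eval_C,
    eval_nodal_at_node (mem_univ j), mul_zero, zero_add, eval_finsetSum]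
  refine sum_eq_single j (fun i _ hij => ?_) (by simp)
  rw [eval_nodal_at_node (mem_erase.2 ⟨Ne.symm hij, mem_univ j⟩), mul_zero]

lemma partialFractionNumerator_eq_zero_iff (hp : Injective p) :
    partialFractionNumerator p c w = 0 ↔ c = 0 ∧ w = 0 := by
  refine ⟨fun h => ⟨?_, funext fun j => ?_⟩, ?_⟩
  · simpa [h] using (coeff_card_partialFractionNumerator p c w).symm
  · have hne : (nodal (univ.erase j) p).eval (p j) ≠ 0 :=
      eval_nodal_not_at_node fun i hi => hp.ne (mem_erase.1 hi).1.symm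
    simpa [h, hne] using (eval_node_partialFractionNumerator p c w j).symm
  · rintro ⟨rfl, rfl⟩
    simp [partialFractionNumerator]

theorem eq_zero_of_add_sum_div_sub_eq_zero {κ : Type*} [Fintype κ] {p : ι → F}
    (hp : Injective p) {z : κ → F} (hz : Injective z) (hcard : Fintype.card ι < Fintype.card κ)
    (hzp : ∀ k j, z k ≠ p j) {c : F} {w : ι → F} (h : ∀ k, c + ∑ j, w j / (z k - p j) = 0) :
    c = 0 ∧ w = 0 := by
  rw [← partialFractionNumerator_eq_zero_iff p c w hp]
  refine eq_zero_of_natDegree_lt_card_of_eval_eq_zero _ hz (fun k => ?_)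
    ((natDegree_partialFractionNumerator_le p c w).trans_lt hcard)
  rw [eval_partialFractionNumerator p c w (hzp k), h k, mul_zero]

end PartialFraction

theorem bordered_cauchy_det_ne_zero_general (N : ℕ)
    (z : Fin (N + 1) → ℂ) (p : Fin N → ℂ)
    (hz : Function.Injective z) (hp : Function.Injective p)
    (hzp : ∀ k j, z k ≠ p j)
    (B : Matrix (Fin (N + 1)) (Fin (N + 1)) ℂ)
    (hB : ∀ k, B k 0 = 1)
    (hB' : ∀ k (j : Fin N), B k j.succ = (z k - p j)⁻¹) :
    B.det ≠ 0 := by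
  intro hdet
  obtain ⟨v, hv, hBv⟩ := Matrix.exists_mulVec_eq_zero_iff.2 hdet
  have hrow (k : Fin (N + 1)) : v 0 + ∑ j : Fin N, v j.succ / (z k - p j) = 0 := by
    simpa [Matrix.mulVec, dotProduct, Fin.sum_univ_succ, hB, hB', div_eq_inv_mul]
      using congrFun hBv k
  obtain ⟨hv0, hvs⟩ := eq_zero_of_add_sum_div_sub_eq_zero hp hz (by simp) hzp hrow
  exact hv (funext fun i => Fin.cases hv0 (congrFun hvs) i)

/-- The bordered Cauchy matrix `B` is invertible: `det B ≠ 0`. -/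
theorem bordered_cauchy_det_ne_zero (N : ℕ) (hN : 1 ≤ N)
    (z : Fin (N + 1) → ℂ) (p : Fin N → ℂ)
    (hz : Function.Injective z) (hp : Function.Injective p)
    (hzp : ∀ k j, z k ≠ p j)
    (B : Matrix (Fin (N + 1)) (Fin (N + 1)) ℂ)
    (hB : ∀ k, B k 0 = 1)
    (hB' : ∀ k (j : Fin N), B k j.succ = (z k - p j)⁻¹) :
    B.det ≠ 0 :=
  bordered_cauchy_det_ne_zero_general N z p hz hp hzp B hB hB'
end

section
/- Let N ≥ 1 and let z_0, …, z_N and p_1, …, p_N be complex numbers. Let Q(X) = ∏_{j=1}^{N} (X − p_j) and R(X) = X·Q(X). Then V(R) = (∑_{α=0}^{N} z_α − ∑_{j=1}^{N} p_j) · V(Q), where V is the determinant linear form defined in the context. -/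
open Polynomial

/-! With `c = ∑ z_k - ∑ p_j`, the polynomials `R - c Q = (X - c) Q` and `W = ∏ₖ (X - z_k)` are
monic of degree `N + 1` with the same subleading coefficient `-∑ z_k`, so they differ by a
polynomial of degree `< N`. The form `V` kills `W`, which vanishes at every `z_k`, and every
polynomial of degree `< N`, whose values at the `z_k` are a combination of the power columns.
Hence `V(R) = c V(Q)`. -/

namespace Polynomial

variable {R : Type*} [CommRing R]

theorem degree_sub_lt_of_nextCoeff_eq {p q : R[X]} {n : ℕ} (hp : p.Monic) (hq : q.Monic)
    (hpn : p.natDegree = n + 1) (hqn : q.natDegree = n + 1) (hnext : p.nextCoeff = q.nextCoeff) :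
    (p - q).degree < n := by
  have coeff_n {f : R[X]} (hf : f.natDegree = n + 1) : f.coeff n = f.nextCoeff := by
    rw [nextCoeff_of_natDegree_pos (by omega), hf, Nat.add_sub_cancel]
  rw [degree_lt_iff_coeff_zero]
  intro m hm
  rw [coeff_sub]
  obtain rfl | rfl | hlt : m = n ∨ m = n + 1 ∨ n + 1 < m := by omega
  · rw [coeff_n hpn, coeff_n hqn, hnext, sub_self]
  · rw [← hpn, hp.coeff_natDegree, hpn, ← hqn, hq.coeff_natDegree, sub_self]
  · rw [coeff_eq_zero_of_natDegree_lt (by omega), coeff_eq_zero_of_natDegree_lt (by omega),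
      sub_self]

end Polynomial

namespace Matrix

variable {R : Type*} [CommRing R] {n : ℕ}

def vandermondeWithCol (z v : Fin (n + 1) → R) : Matrix (Fin (n + 1)) (Fin (n + 1)) R :=
  of fun k j => Fin.cases (v k) (fun j' : Fin n => z k ^ (j' : ℕ)) j

theorem vandermondeWithCol_eq_updateCol (z v : Fin (n + 1) → R) :
    vandermondeWithCol z v = (vandermondeWithCol z 0).updateCol 0 v := by
  ext k j
  cases j using Fin.cases <;> simp [vandermondeWithCol]

theorem det_vandermondeWithCol_add (z u v : Fin (n + 1) → R) :
    (vandermondeWithCol z (u + v)).det =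
      (vandermondeWithCol z u).det + (vandermondeWithCol z v).det := by
  rw [vandermondeWithCol_eq_updateCol z (u + v), det_updateCol_add,
    ← vandermondeWithCol_eq_updateCol, ← vandermondeWithCol_eq_updateCol]

theorem det_vandermondeWithCol_smul (z v : Fin (n + 1) → R) (c : R) :
    (vandermondeWithCol z (c • v)).det = c * (vandermondeWithCol z v).det := by
  rw [vandermondeWithCol_eq_updateCol z (c • v), det_updateCol_smul,
    ← vandermondeWithCol_eq_updateCol]

end Matrix

open Matrix

variable {R : Type*} [CommRing R] {n : ℕ}

noncomputable def vandermondeForm (z : Fin (n + 1) → R) : R[X] →ₗ[R] R where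
  toFun P := (vandermondeWithCol z fun k => P.eval (z k)).det
  map_add' P Q := by
    simp only [eval_add]
    exact det_vandermondeWithCol_add z (fun k => P.eval (z k)) fun k => Q.eval (z k)
  map_smul' c P := by
    simp only [eval_smul, RingHom.id_apply]
    exact det_vandermondeWithCol_smul z (fun k => P.eval (z k)) c

theorem vandermondeForm_apply (z : Fin (n + 1) → R) (P : R[X]) :
    vandermondeForm z P = (vandermondeWithCol z fun k => P.eval (z k)).det :=
  rfl

theorem vandermondeForm_eq_zero_of_eval_eq_zero (z : Fin (n + 1) → R) {P : R[X]}
    (hP : ∀ k, P.eval (z k) = 0) : vandermondeForm z P = 0 :=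
  det_eq_zero_of_column_eq_zero 0 fun k => by simp [vandermondeWithCol, hP]

theorem vandermondeForm_eq_zero_of_degree_lt (z : Fin (n + 1) → R) {P : R[X]}
    (hP : P.degree < n) : vandermondeForm z P = 0 := by
  set c : Fin (n + 1) → R := Fin.cases 0 fun i => P.coeff i
  have hcol : (fun k => P.eval (z k)) = fun k => ∑ j, c j • vandermondeWithCol z 0 k j := by
    funext k
    simp [eval_eq_sum_degreeLTEquiv (mem_degreeLT.2 hP), Fin.sum_univ_succ, c,
      vandermondeWithCol, degreeLTEquiv]
  rw [vandermondeForm_apply, hcol, vandermondeWithCol_eq_updateCol, det_updateCol_sum]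
  simp [c]

theorem vandermondeForm_X_mul_prod {ι : Type*} [Fintype ι] (hι : Fintype.card ι = n)
    (z : Fin (n + 1) → R) (p : ι → R) :
    vandermondeForm z (X * ∏ j, (X - C (p j))) =
      ((∑ k, z k) - ∑ j, p j) * vandermondeForm z (∏ j, (X - C (p j))) := by
  nontriviality R
  set c := (∑ k, z k) - ∑ j, p j
  set Q := ∏ j, (X - C (p j))
  set W := ∏ k, (X - C (z k))
  have hQ : Q.Monic := monic_prod_of_monic _ _ fun j _ => monic_X_sub_C (p j)
  have hW : W.Monic := monic_prod_of_monic _ _ fun k _ => monic_X_sub_C (z k)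
  have hrem : ((X - C c) * Q - W).degree < (n : WithBot ℕ) := by
    refine degree_sub_lt_of_nextCoeff_eq ((monic_X_sub_C c).mul hQ) hW ?_ ?_ ?_
    · rw [(monic_X_sub_C c).natDegree_mul hQ, natDegree_X_sub_C,
        natDegree_finsetProd_X_sub_C_eq_card, Finset.card_univ, hι, add_comm]
    · simp [W]
    · rw [Monic.nextCoeff_mul (monic_X_sub_C c) hQ, nextCoeff_X_sub_C, prod_X_sub_C_nextCoeff,
        prod_X_sub_C_nextCoeff]
      ring
  have hW_root (k : Fin (n + 1)) : W.eval (z k) = 0 := by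
    rw [eval_prod]
    exact Finset.prod_eq_zero (Finset.mem_univ k) (by simp)
  have hsplit : X * Q = c • Q + W + ((X - C c) * Q - W) := by
    rw [smul_eq_C_mul]
    ring
  rw [hsplit, map_add, map_add, map_smul, smul_eq_mul,
    vandermondeForm_eq_zero_of_eval_eq_zero z hW_root,
    vandermondeForm_eq_zero_of_degree_lt z hrem, add_zero, add_zero]

theorem det_form_of_XQ_general (N : ℕ)
    (z : Fin (N + 1) → ℂ) (p : Fin N → ℂ)
    (Q R : Polynomial ℂ)
    (hQ : Q = ∏ j, (X - C (p j)))
    (hR : R = X * Q) :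
    Matrix.det (Matrix.of fun (k : Fin (N + 1)) (j : Fin (N + 1)) =>
      (Fin.cases (R.eval (z k)) (fun j' : Fin N => z k ^ (j' : ℕ)) j : ℂ))
    = ((∑ k, z k) - ∑ j, p j) *
      Matrix.det (Matrix.of fun (k : Fin (N + 1)) (j : Fin (N + 1)) =>
        (Fin.cases (Q.eval (z k)) (fun j' : Fin N => z k ^ (j' : ℕ)) j : ℂ)) := by
  subst hR hQ
  exact vandermondeForm_X_mul_prod (Fintype.card_fin N) z p

/-- With `Q(X) = ∏ (X − p_j)` and `R(X) = X·Q(X)`, one has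
`V(R) = (∑ z_α − ∑ p_j) · V(Q)` for the determinant linear form `V`. -/
theorem det_form_of_XQ (N : ℕ) (hN : 1 ≤ N)
    (z : Fin (N + 1) → ℂ) (p : Fin N → ℂ)
    (Q R : Polynomial ℂ)
    (hQ : Q = ∏ j, (X - C (p j)))
    (hR : R = X * Q) :
    Matrix.det (Matrix.of fun (k : Fin (N + 1)) (j : Fin (N + 1)) =>
      (Fin.cases (R.eval (z k)) (fun j' : Fin N => z k ^ (j' : ℕ)) j : ℂ))
    = ((∑ k, z k) - ∑ j, p j) *
      Matrix.det (Matrix.of fun (k : Fin (N + 1)) (j : Fin (N + 1)) =>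
        (Fin.cases (Q.eval (z k)) (fun j' : Fin N => z k ^ (j' : ℕ)) j : ℂ)) :=
  det_form_of_XQ_general N z p Q R hQ hR
end

section
/- Let u_0 : ℝ → ℝ be continuously differentiable with u_0(y) → 0 and u_0′(y) → 0 as |y| → ∞, let t ∈ ℝ, and let x ∈ ℝ with x ∉ K_t(u_0). Then the set {y ∈ ℝ : f_t(y) = x} is finite with odd cardinality, and f_t′(y) ≠ 0 for every y in this set. -/
/-!
A point of the fiber is a zero of `g = f_t - x` at which `g' ≠ 0`, so `g` changes sign there;
in particular these zeros are isolated. Since `f_t(y) - y = 2t·u₀(y)` is bounded, they all lie in a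
compact interval `[a, b]` with `g a < 0 < g b`, so there are finitely many of them, and as the sign
of `g` flips at each one on the way from `a` to `b`, their number is odd.
-/

open Filter Set Topology

def ChangesSignAt (g : ℝ → ℝ) (s : ℝ) : Prop :=
  ∀ᶠ y in 𝓝[<] s, ∀ᶠ z in 𝓝[>] s, g y * g z < 0

theorem HasDerivAt.changesSignAt {g : ℝ → ℝ} {g' s : ℝ} (hg : HasDerivAt g g' s)
    (h0 : g s = 0) (hg' : g' ≠ 0) : ChangesSignAt g s := by
  have hslope : ∀ᶠ y in 𝓝[≠] s, 0 < g' * slope g s y :=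
    ((hasDerivAt_iff_tendsto_slope.mp hg).const_mul g').eventually
      (lt_mem_nhds (mul_self_pos.mpr hg'))
  have hval (y : ℝ) : g' * g y = (y - s) * (g' * slope g s y) := by
    rw [mul_left_comm, ← smul_eq_mul (y - s), sub_smul_slope, h0, vsub_eq_sub, sub_zero]
  have hleft : ∀ᶠ y in 𝓝[<] s, g' * g y < 0 := by
    filter_upwards [hslope.filter_mono (nhdsLT_le_nhdsNE s), self_mem_nhdsWithin]
      with y hy (hys : y < s)
    exact hval y ▸ mul_neg_of_neg_of_pos (sub_neg.mpr hys) hy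
  have hright : ∀ᶠ z in 𝓝[>] s, 0 < g' * g z := by
    filter_upwards [hslope.filter_mono (nhdsGT_le_nhdsNE s), self_mem_nhdsWithin]
      with z hz (hzs : s < z)
    exact hval z ▸ mul_pos (sub_pos.mpr hzs) hz
  filter_upwards [hleft] with y hy
  filter_upwards [hright] with z hz
  have hprod : (g' * g') * (g y * g z) < 0 := by
    have hexpand : (g' * g y) * (g' * g z) = (g' * g') * (g y * g z) := by ring
    linarith [mul_neg_of_neg_of_pos hy hz]
  exact neg_of_mul_neg_right hprod (mul_self_nonneg g')

theorem ChangesSignAt.eventually_ne_zero {g : ℝ → ℝ} {s : ℝ} (h : ChangesSignAt g s) :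
    ∀ᶠ y in 𝓝[≠] s, g y ≠ 0 := by
  rw [← nhdsLT_sup_nhdsGT, eventually_sup]
  obtain ⟨y, hy⟩ := h.exists
  refine ⟨h.mono fun y hy => ?_, hy.mono fun z hz => right_ne_zero_of_mul hz.ne⟩
  obtain ⟨z, hz⟩ := hy.exists
  exact left_ne_zero_of_mul hz.ne

theorem IsCompact.finite_zeros_of_changesSignAt {g : ℝ → ℝ} (hg : Continuous g) {K : Set ℝ}
    (hK : IsCompact K) (h : ∀ s ∈ K, g s = 0 → ChangesSignAt g s) :
    {y ∈ K | g y = 0}.Finite := by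
  refine (hK.inter_right (isClosed_singleton.preimage hg)).finite
    (isDiscrete_iff_nhdsNE.mpr fun s hs => inf_principal_eq_bot.mpr ?_)
  exact (h s hs.1 hs.2).eventually_ne_zero.mono fun y hy hyZ => hy hyZ.2

theorem mul_pos_of_forall_mem_Icc_ne_zero {g : ℝ → ℝ} {a b : ℝ} (hg : ContinuousOn g (Icc a b))
    (hab : a ≤ b) (h : ∀ y ∈ Icc a b, g y ≠ 0) : 0 < g a * g b := by
  by_contra! hle
  obtain ⟨c, hc, hc0⟩ : (0 : ℝ) ∈ g '' Icc a b := by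
    rcases mul_nonpos_iff.mp hle with ⟨ha, hb⟩ | ⟨ha, hb⟩
    · exact intermediate_value_Icc' hab hg ⟨hb, ha⟩
    · exact intermediate_value_Icc hab hg ⟨ha, hb⟩
  exact h c hc hc0

theorem pos_mul_iff_even_card_zeros {g : ℝ → ℝ} (hg : Continuous g) (Z : Finset ℝ)
    (hZ : ∀ s ∈ Z, ChangesSignAt g s) {a b : ℝ} (hab : a ≤ b) (ha : g a ≠ 0) (hb : g b ≠ 0)
    (hzeros : {y ∈ Icc a b | g y = 0} = Z) : 0 < g a * g b ↔ Even Z.card := by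
  classical
  induction Z using Finset.induction_on_max generalizing b with
  | empty =>
    simp only [Finset.card_empty, Even.zero, iff_true]
    refine mul_pos_of_forall_mem_Icc_ne_zero hg.continuousOn hab fun y hy hy0 => ?_
    simpa using hzeros.subset ⟨hy, hy0⟩
  | insert m Z hZm ih =>
    have hmem (y : ℝ) : (y ∈ Icc a b ∧ g y = 0) ↔ y = m ∨ y ∈ Z := by
      simpa using Set.ext_iff.mp hzeros y
    have hm := (hmem m).mpr (Or.inl rfl)
    have ham : a < m := hm.1.1.lt_of_ne fun h => ha (h ▸ hm.2)
    have hmb : m < b := hm.1.2.lt_of_ne fun h => hb (h ▸ hm.2)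
    have hZ_lt : ∀ᶠ c in 𝓝[<] m, c ∈ Ioo a m ∧ ∀ s ∈ Z, c ∈ Ioo s m :=
      Eventually.and (Ioo_mem_nhdsLT ham)
        ((eventually_all_finset Z).mpr fun s hs => Ioo_mem_nhdsLT (hZm s hs))
    obtain ⟨c, ⟨⟨hac, hcm⟩, hZc⟩, hcross⟩ :=
      (hZ_lt.and (hZ m (Finset.mem_insert_self m Z))).exists
    obtain ⟨d, ⟨hmd, hdb⟩, hcd⟩ := (Eventually.and (Ioo_mem_nhdsGT hmb) hcross).exists
    have hleft : {y ∈ Icc a c | g y = 0} = Z := by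
      ext y
      refine ⟨fun ⟨⟨hay, hyc⟩, hy0⟩ => ?_, fun hy => ?_⟩
      · rcases (hmem y).mp ⟨⟨hay, hyc.trans (hcm.trans hmb).le⟩, hy0⟩ with rfl | hy
        · exact absurd hyc hcm.not_ge
        · exact hy
      · obtain ⟨⟨hay, -⟩, hy0⟩ := (hmem y).mpr (Or.inr hy)
        exact ⟨⟨hay, (hZc y hy).1.le⟩, hy0⟩
    have hright : 0 < g d * g b := by
      refine mul_pos_of_forall_mem_Icc_ne_zero hg.continuousOn hdb.le fun y hy hy0 => ?_
      have hym : y ≤ m := by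
        have hay : a ≤ y := (hac.trans (hcm.trans hmd)).le.trans hy.1
        rcases (hmem y).mp ⟨⟨hay, hy.2⟩, hy0⟩ with rfl | hy
        exacts [le_rfl, (hZm y hy).le]
      exact hmd.not_ge (hy.1.trans hym)
    rw [Finset.card_insert_of_notMem fun h => (hZm m h).false, Nat.even_add_one,
      ← ih (fun s hs => hZ s (Finset.mem_insert_of_mem hs)) hac.le (left_ne_zero_of_mul hcd.ne)
        hleft]
    have hcb : g c * g b < 0 := by
      refine neg_of_mul_neg_right (a := g d * g d) ?_ (mul_self_nonneg (g d))
      linarith [mul_neg_of_neg_of_pos hcd hright]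
    have hprod : (g a * g b) * (g a * g c) < 0 := by
      linarith [mul_neg_of_pos_of_neg (mul_self_pos.mpr ha) hcb]
    constructor
    · exact fun hpos hneg => (mul_pos hpos hneg).not_gt hprod
    · exact fun hneg => by nlinarith

theorem finite_and_odd_ncard_preimage_of_abs_sub_le {f : ℝ → ℝ} (hf : Continuous f) {B : ℝ}
    (hB : ∀ y, |f y - y| ≤ B) {x : ℝ} (hx : ∀ y, f y = x → deriv f y ≠ 0) :
    (f ⁻¹' {x}).Finite ∧ Odd (f ⁻¹' {x}).ncard := by
  set g : ℝ → ℝ := fun y => f y - x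
  have hg : Continuous g := hf.sub continuous_const
  have hcross (y : ℝ) (hy : g y = 0) : ChangesSignAt g y := by
    have hfy : f y = x := sub_eq_zero.mp hy
    exact ((differentiableAt_of_deriv_ne_zero (hx y hfy)).hasDerivAt.sub_const x).changesSignAt
      hy (hx y hfy)
  have hzeros : {y ∈ Icc (x - B - 1) (x + B + 1) | g y = 0} = f ⁻¹' {x} := by
    ext y
    have := abs_le.mp (hB y)
    simp only [g, mem_Icc, sub_eq_zero, mem_preimage, mem_singleton_iff]
    exact ⟨And.right, fun hy => ⟨⟨by linarith, by linarith⟩, hy⟩⟩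
  have hfin : (f ⁻¹' {x}).Finite :=
    hzeros ▸ isCompact_Icc.finite_zeros_of_changesSignAt hg fun y _ => hcross y
  have hB0 : 0 ≤ B := (abs_nonneg _).trans (hB 0)
  have hlow : g (x - B - 1) < 0 := by linarith [(abs_le.mp (hB (x - B - 1))).2]
  have hhigh : 0 < g (x + B + 1) := by linarith [(abs_le.mp (hB (x + B + 1))).1]
  refine ⟨hfin, ?_⟩
  rw [ncard_eq_toFinset_card _ hfin, ← Nat.not_even_iff_odd,
    ← pos_mul_iff_even_card_zeros hg _
      (fun y hy => hcross y (sub_eq_zero.mpr (hfin.mem_toFinset.mp hy)))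
      (by linarith) hlow.ne hhigh.ne' (by rw [hzeros, hfin.coe_toFinset])]
  exact (mul_neg_of_neg_of_pos hlow hhigh).not_gt

theorem fiber_finite_odd_card_general
    (u₀ : ℝ → ℝ) (hu : ContDiff ℝ 1 u₀)
    (hu0 : Tendsto u₀ (cocompact ℝ) (nhds 0))
    (t : ℝ) (x : ℝ)
    (hx : x ∉ (fun y => y + 2 * t * u₀ y) ''
        {y : ℝ | deriv (fun y => y + 2 * t * u₀ y) y = 0}) :
    ({y : ℝ | y + 2 * t * u₀ y = x}.Finite ∧
      Odd ({y : ℝ | y + 2 * t * u₀ y = x}.ncard)) ∧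
    ∀ y ∈ {y : ℝ | y + 2 * t * u₀ y = x},
      deriv (fun y => y + 2 * t * u₀ y) y ≠ 0 := by
  have hcont : Continuous fun y => 2 * t * u₀ y := continuous_const.mul hu.continuous
  obtain ⟨B, hB⟩ := isBounded_iff_forall_norm_le.mp <|
    hcont.isBounded_range_iff_isBigO.mpr ((hu0.const_mul (2 * t)).isBigO_one ℝ)
  have hderiv (y : ℝ) (hy : y + 2 * t * u₀ y = x) : deriv (fun y => y + 2 * t * u₀ y) y ≠ 0 :=
    fun h0 => hx ⟨y, h0, hy⟩
  refine ⟨finite_and_odd_ncard_preimage_of_abs_sub_le (f := fun y => y + 2 * t * u₀ y) (B := B)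
    (continuous_id.add hcont) (fun y => ?_) hderiv, hderiv⟩
  simpa using hB _ (mem_range_self y)

/-- For `x` outside the set of critical values of `f_t(y) = y + 2t·u₀(y)`, the fiber
`{y : f_t(y) = x}` is finite with odd cardinality, and `f_t′` does not vanish on it. -/
theorem fiber_finite_odd_card
    (u₀ : ℝ → ℝ) (hu : ContDiff ℝ 1 u₀)
    (hu0 : Tendsto u₀ (cocompact ℝ) (nhds 0))
    (hu0' : Tendsto (deriv u₀) (cocompact ℝ) (nhds 0))
    (t : ℝ) (x : ℝ)
    (hx : x ∉ (fun y => y + 2 * t * u₀ y) ''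
        {y : ℝ | deriv (fun y => y + 2 * t * u₀ y) y = 0}) :
    ({y : ℝ | y + 2 * t * u₀ y = x}.Finite ∧
      Odd ({y : ℝ | y + 2 * t * u₀ y = x}.ncard)) ∧
    ∀ y ∈ {y : ℝ | y + 2 * t * u₀ y = x},
      deriv (fun y => y + 2 * t * u₀ y) y ≠ 0 :=
  fiber_finite_odd_card_general u₀ hu hu0 t x hx
end

section
/- Let u_0 : ℝ → ℝ be continuously differentiable with u_0(y) → 0 and u_0′(y) → 0 as |y| → ∞, let t ∈ ℝ, and let x ∈ ℝ with x ∉ K_t(u_0). If y_0 < y_1 < ⋯ < y_m is the increasing enumeration of the (finite) set {y ∈ ℝ : f_t(y) = x}, then m is even and (−1)^k · f_t′(y_k) > 0 for every k = 0, …, m. -/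
open Filter Set Topology

/-!
Between two consecutive points of the fiber, `f - x` has no zero and hence constant sign; at a
point of the fiber where `f' ≠ 0` that sign is the sign of `f'` on the right and the opposite one
on the left. So the derivatives at consecutive points have opposite signs. Since `f → ∓∞` at
`∓∞`, `f < x` left of the first point and `f > x` right of the last, which forces
`f' > 0` at both ends, and hence `m` even.
-/

theorem HasDerivAt.eventually_pos_mul_sub_div {f : ℝ → ℝ} {d a : ℝ} (hf : HasDerivAt f d a)
    (hd : d ≠ 0) : ∀ᶠ z in 𝓝[≠] a, 0 < d * (f z - f a) / (z - a) := by
  have hlim : Tendsto (fun z => d * slope f a z) (𝓝[≠] a) (𝓝 (d * d)) :=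
    (hasDerivAt_iff_tendsto_slope.mp hf).const_mul d
  filter_upwards [hlim.eventually (lt_mem_nhds (mul_self_pos.mpr hd))] with z hz
  rwa [slope_def_field, ← mul_div_assoc] at hz

theorem HasDerivAt.eventually_pos_mul_sub_nhdsGT {f : ℝ → ℝ} {d a : ℝ} (hf : HasDerivAt f d a)
    (hd : d ≠ 0) : ∀ᶠ z in 𝓝[>] a, 0 < d * (f z - f a) := by
  filter_upwards [(hf.eventually_pos_mul_sub_div hd).filter_mono (nhdsGT_le_nhdsNE a),
    self_mem_nhdsWithin] with z hz (hza : a < z)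
  exact (div_pos_iff_of_pos_right (sub_pos.mpr hza)).mp hz

theorem HasDerivAt.eventually_mul_sub_neg_nhdsLT {f : ℝ → ℝ} {d a : ℝ} (hf : HasDerivAt f d a)
    (hd : d ≠ 0) : ∀ᶠ z in 𝓝[<] a, d * (f z - f a) < 0 := by
  filter_upwards [(hf.eventually_pos_mul_sub_div hd).filter_mono (nhdsLT_le_nhdsNE a),
    self_mem_nhdsWithin] with z hz (hza : z < a)
  rw [div_eq_mul_inv] at hz
  exact neg_of_mul_pos_left hz (inv_nonpos.mpr (sub_nonpos.mpr hza.le))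

theorem IsPreconnected.mul_sub_pos_of_forall_ne {S : Set ℝ} {f : ℝ → ℝ} {x : ℝ}
    (hS : IsPreconnected S) (hf : ContinuousOn f S) (hx : ∀ z ∈ S, f z ≠ x) {z₁ z₂ : ℝ}
    (h₁ : z₁ ∈ S) (h₂ : z₂ ∈ S) : 0 < (f z₁ - x) * (f z₂ - x) := by
  by_contra! h
  obtain ⟨c, hc, hfc⟩ : x ∈ f '' S := by
    rcases mul_nonpos_iff.mp h with ⟨h₁', h₂'⟩ | ⟨h₁', h₂'⟩
    · exact hS.intermediate_value h₂ h₁ hf ⟨by linarith, by linarith⟩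
    · exact hS.intermediate_value h₁ h₂ hf ⟨by linarith, by linarith⟩
  exact hx c hc hfc

-- The sign of `f - f a` cannot change on `S`, and next to `a` it is the sign of `d`.
theorem HasDerivAt.pos_mul_sub_of_mem_nhdsGT {f : ℝ → ℝ} {d a : ℝ} {S : Set ℝ}
    (hf : HasDerivAt f d a) (hd : d ≠ 0) (hS : IsPreconnected S) (hSa : S ∈ 𝓝[>] a)
    (hfS : ContinuousOn f S) (hne : ∀ z ∈ S, f z ≠ f a) {z : ℝ} (hz : z ∈ S) :
    0 < d * (f z - f a) := by
  obtain ⟨w, hw, hwS⟩ := ((hf.eventually_pos_mul_sub_nhdsGT hd).and hSa).exists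
  have h := mul_pos hw (hS.mul_sub_pos_of_forall_ne hfS hne hwS hz)
  rw [show d * (f w - f a) * ((f w - f a) * (f z - f a)) = d * (f z - f a) * (f w - f a) ^ 2 by
    ring] at h
  exact pos_of_mul_pos_left h (sq_nonneg _)

theorem HasDerivAt.mul_sub_neg_of_mem_nhdsLT {f : ℝ → ℝ} {d a : ℝ} {S : Set ℝ}
    (hf : HasDerivAt f d a) (hd : d ≠ 0) (hS : IsPreconnected S) (hSa : S ∈ 𝓝[<] a)
    (hfS : ContinuousOn f S) (hne : ∀ z ∈ S, f z ≠ f a) {z : ℝ} (hz : z ∈ S) :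
    d * (f z - f a) < 0 := by
  obtain ⟨w, hw, hwS⟩ := ((hf.eventually_mul_sub_neg_nhdsLT hd).and hSa).exists
  have h := mul_neg_of_neg_of_pos hw (hS.mul_sub_pos_of_forall_ne hfS hne hwS hz)
  rw [show d * (f w - f a) * ((f w - f a) * (f z - f a)) = d * (f z - f a) * (f w - f a) ^ 2 by
    ring] at h
  exact neg_of_mul_neg_left h (sq_nonneg _)

theorem HasDerivAt.pos_of_forall_lt_ne {f : ℝ → ℝ} {d a : ℝ} (hf : HasDerivAt f d a)
    (hd : d ≠ 0) (hbot : Tendsto f atBot atBot) (hfa : ContinuousOn f (Iio a))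
    (hne : ∀ z < a, f z ≠ f a) : 0 < d := by
  obtain ⟨p, hpa, hfp⟩ := ((eventually_lt_atBot a).and
    (hbot.eventually (eventually_lt_atBot (f a)))).exists
  exact pos_of_mul_neg_left (hf.mul_sub_neg_of_mem_nhdsLT hd isPreconnected_Iio
    self_mem_nhdsWithin hfa hne hpa) (sub_nonpos.mpr hfp.le)

theorem HasDerivAt.pos_of_forall_gt_ne {f : ℝ → ℝ} {d a : ℝ} (hf : HasDerivAt f d a)
    (hd : d ≠ 0) (htop : Tendsto f atTop atTop) (hfa : ContinuousOn f (Ioi a))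
    (hne : ∀ z > a, f z ≠ f a) : 0 < d := by
  obtain ⟨q, hqa, hfq⟩ := ((eventually_gt_atTop a).and
    (htop.eventually (eventually_gt_atTop (f a)))).exists
  exact pos_of_mul_pos_left (hf.pos_mul_sub_of_mem_nhdsGT hd isPreconnected_Ioi
    self_mem_nhdsWithin hfa hne hqa) (sub_nonneg.mpr hfq.le)

theorem HasDerivAt.mul_neg_of_forall_Ioo_ne {f : ℝ → ℝ} {da db a b : ℝ} (hfa : HasDerivAt f da a)
    (hfb : HasDerivAt f db b) (hda : da ≠ 0) (hdb : db ≠ 0) (hab : a < b) (hfab : f a = f b)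
    (hf : ContinuousOn f (Ioo a b)) (hne : ∀ z ∈ Ioo a b, f z ≠ f a) : da * db < 0 := by
  obtain ⟨z, hz⟩ := nonempty_Ioo.mpr hab
  have ha := hfa.pos_mul_sub_of_mem_nhdsGT hda isPreconnected_Ioo (Ioo_mem_nhdsGT hab) hf hne hz
  have hb := hfb.mul_sub_neg_of_mem_nhdsLT hdb isPreconnected_Ioo (Ioo_mem_nhdsLT hab) hf
    (hfab ▸ hne) hz
  rw [← hfab] at hb
  have h := mul_neg_of_pos_of_neg ha hb
  rw [show da * (f z - f a) * (db * (f z - f a)) = da * db * (f z - f a) ^ 2 by ring] at h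
  exact neg_of_mul_neg_left h (sq_nonneg _)

theorem Fin.neg_one_pow_mul_pos {R : Type*} [CommRing R] [LinearOrder R] [IsStrictOrderedRing R]
    {m : ℕ} {d : Fin (m + 1) → R} (h₀ : 0 < d 0)
    (hsucc : ∀ k : Fin m, d k.castSucc * d k.succ < 0) (k : Fin (m + 1)) :
    0 < (-1) ^ (k : ℕ) * d k := by
  induction k using Fin.induction with
  | zero => simpa using h₀
  | succ k ih =>
    have hsq : ((-1 : R) ^ (k : ℕ)) * (-1) ^ (k : ℕ) = 1 := by rw [← mul_pow]; simp
    have h : (-1) ^ (k.succ : ℕ) * d k.succ * ((-1) ^ (k.castSucc : ℕ) * d k.castSucc)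
        = -(d k.castSucc * d k.succ) := by
      simp only [Fin.val_succ, Fin.val_castSucc, pow_succ]
      linear_combination (-(d k.castSucc * d k.succ)) * hsq
    exact pos_of_mul_pos_left (h ▸ neg_pos.mpr (hsucc k)) ih.le

theorem alternating_deriv_sign_of_range_eq_fiber {f : ℝ → ℝ} {x : ℝ} {m : ℕ}
    {y : Fin (m + 1) → ℝ} (hf : Differentiable ℝ f) (hbot : Tendsto f atBot atBot)
    (htop : Tendsto f atTop atTop) (hx : x ∉ f '' {z | deriv f z = 0}) (hy : StrictMono y)
    (hrange : range y = {z | f z = x}) :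
    Even m ∧ ∀ k : Fin (m + 1), 0 < (-1 : ℝ) ^ (k : ℕ) * deriv f (y k) := by
  have hc := hf.continuous
  have hD : ∀ z, HasDerivAt f (deriv f z) z := fun z => (hf z).hasDerivAt
  have hfiber : ∀ z, f z = x → ∃ k, y k = z := fun z hz => (hrange.symm ▸ hz : z ∈ range y)
  have hfy : ∀ k, f (y k) = x := fun k => (hrange ▸ mem_range_self k : y k ∈ {z | f z = x})
  have hne : ∀ k, deriv f (y k) ≠ 0 := fun k h => hx ⟨y k, h, hfy k⟩
  have hsign := Fin.neg_one_pow_mul_pos (d := fun k => deriv f (y k)) ?first ?alternate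
  · refine ⟨?_, hsign⟩
    have hlast : 0 < deriv f (y (Fin.last m)) := (hD _).pos_of_forall_gt_ne (hne _) htop
      hc.continuousOn fun z hz hfz => by
        obtain ⟨k, rfl⟩ := hfiber z (hfz.trans (hfy _))
        exact (hy.lt_iff_lt.mp hz).not_ge (Fin.le_last k)
    have hpow : 0 < (-1 : ℝ) ^ m := by
      simpa using pos_of_mul_pos_left (hsign (Fin.last m)) hlast.le
    exact Nat.not_odd_iff_even.mp fun hodd => absurd (hodd.pow_pos_iff.mp hpow) (by norm_num)
  case first =>
    exact (hD _).pos_of_forall_lt_ne (hne 0) hbot hc.continuousOn fun z hz hfz => by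
      obtain ⟨k, rfl⟩ := hfiber z (hfz.trans (hfy 0))
      exact (hy.lt_iff_lt.mp hz).not_ge (Fin.zero_le k)
  case alternate =>
    intro k
    refine (hD _).mul_neg_of_forall_Ioo_ne (hD _) (hne _) (hne _) (hy k.castSucc_lt_succ)
      ((hfy _).trans (hfy _).symm) hc.continuousOn fun z hz hfz => ?_
    obtain ⟨j, rfl⟩ := hfiber z (hfz.trans (hfy _))
    exact (Fin.castSucc_lt_iff_succ_le.mp (hy.lt_iff_lt.mp hz.1)).not_gt (hy.lt_iff_lt.mp hz.2)

theorem fiber_alternating_derivative_signs_general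
    (u₀ : ℝ → ℝ) (hu : ContDiff ℝ 1 u₀)
    (hu0 : Tendsto u₀ (cocompact ℝ) (nhds 0))
    (t : ℝ) (x : ℝ)
    (hx : x ∉ (fun y => y + 2 * t * u₀ y) ''
        {y : ℝ | deriv (fun y => y + 2 * t * u₀ y) y = 0})
    (m : ℕ) (y : Fin (m + 1) → ℝ) (hmono : StrictMono y)
    (hrange : Set.range y = {y : ℝ | y + 2 * t * u₀ y = x}) :
    Even m ∧
      ∀ k : Fin (m + 1),
        0 < (-1 : ℝ) ^ (k : ℕ) * deriv (fun y => y + 2 * t * u₀ y) (y k) := by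
  have hdiff : Differentiable ℝ fun y => y + 2 * t * u₀ y :=
    differentiable_id.add ((hu.differentiable one_ne_zero).const_mul _)
  have hsmall : Tendsto (fun y => 2 * t * u₀ y) (atBot ⊔ atTop) (𝓝 0) := by
    simpa [← cocompact_eq_atBot_atTop] using hu0.const_mul (2 * t)
  exact alternating_deriv_sign_of_range_eq_fiber hdiff
    (tendsto_id.atBot_add (hsmall.mono_left le_sup_left))
    (tendsto_id.atTop_add (hsmall.mono_left le_sup_right)) hx hmono hrange

/-- If `y 0 < y 1 < ⋯ < y m` enumerates the fiber `{y : f_t(y) = x}` with `x` a regular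
value of `f_t(y) = y + 2t·u₀(y)`, then `m` is even and `(−1)^k · f_t′(y k) > 0` for
every `k`. -/
theorem fiber_alternating_derivative_signs
    (u₀ : ℝ → ℝ) (hu : ContDiff ℝ 1 u₀)
    (hu0 : Tendsto u₀ (cocompact ℝ) (nhds 0))
    (hu0' : Tendsto (deriv u₀) (cocompact ℝ) (nhds 0))
    (t : ℝ) (x : ℝ)
    (hx : x ∉ (fun y => y + 2 * t * u₀ y) ''
        {y : ℝ | deriv (fun y => y + 2 * t * u₀ y) y = 0})
    (m : ℕ) (y : Fin (m + 1) → ℝ) (hmono : StrictMono y)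
    (hrange : Set.range y = {y : ℝ | y + 2 * t * u₀ y = x}) :
    Even m ∧
      ∀ k : Fin (m + 1),
        0 < (-1 : ℝ) ^ (k : ℕ) * deriv (fun y => y + 2 * t * u₀ y) (y k) :=
  fiber_alternating_derivative_signs_general u₀ hu hu0 t x hx m y hmono hrange
end

section
/- Let u_0 : ℝ → ℝ be continuously differentiable with u_0(y) → 0 and u_0′(y) → 0 as |y| → ∞, and let t ∈ ℝ. Then the function x ↦ (number of solutions y of f_t(y) = x) is locally constant on the open set ℝ \ K_t(u_0); in particular it is constant on every connected component of ℝ \ K_t(u_0). -/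
/-!
Since `u₀ → 0` at infinity, `f_t = id + 2t·u₀` is a proper map, and by the inverse function
theorem it is a local homeomorphism near every point where `f_t' ≠ 0`. A proper local
homeomorphism is a covering map, so over the regular values `ℝ \ K_t(u₀)` the map `f_t` is a
covering map, and the cardinality of the fibres of a covering map is locally constant.
-/

open Filter Set Topology

section Covering

variable {E X : Type*} [TopologicalSpace E] [TopologicalSpace X] {f : E → X}

theorem IsEvenlyCovered.eventually_ncard_preimage_singleton {I : Type*} [TopologicalSpace I]
    {x : X} (h : IsEvenlyCovered f x I) :
    ∀ᶠ x' in 𝓝 x, (f ⁻¹' {x'}).ncard = Nat.card I := by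
  obtain ⟨hI, U, hxU, hU, hfU, H, hH⟩ := h
  filter_upwards [hU.mem_nhds hxU] with x' hx'U
  have h' : IsEvenlyCovered f x' I := ⟨hI, U, hx'U, hU, hfU, H, hH⟩
  exact (Nat.card_congr h'.fiberHomeomorph.toEquiv).symm

theorem IsCoveringMapOn.isLocallyConstant_ncard_preimage_singleton {s : Set X}
    (hf : IsCoveringMapOn f s) :
    IsLocallyConstant fun x : s => (f ⁻¹' {(x : X)}).ncard := by
  refine (IsLocallyConstant.iff_eventually_eq _).2 fun x => ?_
  filter_upwards [continuousAt_subtype_val.eventually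
    (hf x x.2).to_isEvenlyCovered_preimage.eventually_ncard_preimage_singleton] with x' hx'
  rw [hx', Nat.card_coe_set_eq]

end Covering

theorem ContDiff.isCoveringMapOn_compl_image_deriv_eq_zero {𝕜 : Type*} [RCLike 𝕜]
    {f : 𝕜 → 𝕜} (hf : ContDiff 𝕜 1 f) (hproper : IsProperMap f) :
    IsCoveringMapOn f (f '' {y | deriv f y = 0})ᶜ := by
  have hlocal (y : 𝕜) (hy : deriv f y ≠ 0) :
      ∃ φ : OpenPartialHomeomorph 𝕜 𝕜, y ∈ φ.source ∧ φ = f :=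
    ⟨_, ((hf.contDiffAt.hasStrictDerivAt one_ne_zero).hasStrictFDerivAt_equiv
      hy).mem_toOpenPartialHomeomorph_source, rfl⟩
  refine hproper.isClosedMap.isCoveringMapOn_of_isLocalHomeomorphOn (fun x hx => ?_)
    fun y hy => (hlocal y fun h => hy ⟨y, h, rfl⟩).imp fun _ => And.imp_right Eq.symm
  -- a regular fibre is compact by properness and discrete by local injectivity
  refine (hproper.isCompact_preimage isCompact_singleton).finite
    (IsDiscrete.of_openPartialHomeomorph f subset_rfl fun y hy => hlocal y fun h => ?_)
  exact hx ⟨y, h, hy⟩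

theorem isProperMap_id_add_of_isBoundedUnder {E : Type*} [NormedAddCommGroup E]
    [ProperSpace E] {g : E → E} (hg : Continuous g)
    (hgb : IsBoundedUnder (· ≤ ·) (cocompact E) (‖g ·‖)) :
    IsProperMap fun y => y + g y := by
  obtain ⟨C, hC⟩ := hgb
  refine isProperMap_iff_tendsto_cocompact.2 ⟨continuous_id.add hg,
    (tendsto_norm_atTop_iff_cobounded.1 ?_).mono_right Metric.cobounded_eq_cocompact.le⟩
  refine tendsto_atTop_mono' _ ?_
    (tendsto_atTop_add_const_right _ (-C) tendsto_norm_cocompact_atTop)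
  filter_upwards [eventually_map.1 hC] with y hy
  have : ‖y‖ ≤ ‖y + g y‖ + ‖g y‖ := by simpa using norm_sub_le (y + g y) (g y)
  linarith

theorem number_of_solutions_locally_constant_general
    (u₀ : ℝ → ℝ) (hu : ContDiff ℝ 1 u₀)
    (hu0 : Tendsto u₀ (cocompact ℝ) (nhds 0))
    (t : ℝ) :
    IsLocallyConstant
      (fun x : (((fun y => y + 2 * t * u₀ y) ''
          {y : ℝ | deriv (fun y => y + 2 * t * u₀ y) y = 0})ᶜ : Set ℝ) =>
        {y : ℝ | y + 2 * t * u₀ y = (x : ℝ)}.ncard) ∧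
    ∀ C : Set ℝ,
      C ⊆ ((fun y => y + 2 * t * u₀ y) ''
          {y : ℝ | deriv (fun y => y + 2 * t * u₀ y) y = 0})ᶜ →
      IsConnected C →
      ∀ x₁ ∈ C, ∀ x₂ ∈ C,
        {y : ℝ | y + 2 * t * u₀ y = x₁}.ncard
          = {y : ℝ | y + 2 * t * u₀ y = x₂}.ncard := by
  have hf : ContDiff ℝ 1 fun y => y + 2 * t * u₀ y := contDiff_id.add (contDiff_const.mul hu)
  have hproper : IsProperMap fun y => y + 2 * t * u₀ y :=
    isProperMap_id_add_of_isBoundedUnder (continuous_const.mul hu.continuous)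
      (hu0.const_mul (2 * t)).norm.isBoundedUnder_le
  have hlc := (hf.isCoveringMapOn_compl_image_deriv_eq_zero hproper)
    |>.isLocallyConstant_ncard_preimage_singleton
  refine ⟨hlc, fun C hCs hC x₁ h₁ x₂ h₂ => hC.isPreconnected.constant
    (f := fun x => {y : ℝ | y + 2 * t * u₀ y = x}.ncard) ?_ h₁ h₂⟩
  exact (continuousOn_iff_continuous_domRestrict.2 hlc.continuous).mono hCs

/-- The number of solutions of `y + 2t·u₀(y) = x` is locally constant on the complement
of the set of critical values of `f_t`, hence constant on each of its connected
components. -/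
theorem number_of_solutions_locally_constant
    (u₀ : ℝ → ℝ) (hu : ContDiff ℝ 1 u₀)
    (hu0 : Tendsto u₀ (cocompact ℝ) (nhds 0))
    (hu0' : Tendsto (deriv u₀) (cocompact ℝ) (nhds 0))
    (t : ℝ) :
    IsLocallyConstant
      (fun x : (((fun y => y + 2 * t * u₀ y) ''
          {y : ℝ | deriv (fun y => y + 2 * t * u₀ y) y = 0})ᶜ : Set ℝ) =>
        {y : ℝ | y + 2 * t * u₀ y = (x : ℝ)}.ncard) ∧
    ∀ C : Set ℝ,
      C ⊆ ((fun y => y + 2 * t * u₀ y) ''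
          {y : ℝ | deriv (fun y => y + 2 * t * u₀ y) y = 0})ᶜ →
      IsConnected C →
      ∀ x₁ ∈ C, ∀ x₂ ∈ C,
        {y : ℝ | y + 2 * t * u₀ y = x₁}.ncard
          = {y : ℝ | y + 2 * t * u₀ y = x₂}.ncard :=
  number_of_solutions_locally_constant_general u₀ hu hu0 t
end

section
/- Let g : ℝ → ℝ be continuously differentiable with g(y) → 0 as y → ±∞, and let φ : ℝ → ℝ be continuous with compact support. Then ∫_ℝ φ(y + g(y))·(1 + g′(y)) dy = ∫_ℝ φ(s) ds. -/
open Filter MeasureTheory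

/-!
If `F` is an antiderivative of `φ`, then `F (y + g y)` is an antiderivative of
`φ (y + g y) * (1 + g' y)`. Since `y + g y → ±∞` as `y → ±∞`, its limits at `±∞` are those of `F`,
whose difference is `∫ φ`. Because `y ↦ y + g y` is proper, both integrands have compact support.
-/

theorem HasCompactSupport.comp_of_tendsto_cocompact {X Y M : Type*} [TopologicalSpace X]
    [R1Space X] [TopologicalSpace Y] [Zero M] {f : Y → M} {u : X → Y} (hf : HasCompactSupport f)
    (hu : Tendsto u (cocompact X) (cocompact Y)) : HasCompactSupport (f ∘ u) := by
  rw [hasCompactSupport_iff_eventuallyEq] at hf ⊢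
  rw [coclosedCompact_eq_cocompact]
  exact hu.eventually (hf.filter_mono cocompact_le_coclosedCompact)

theorem Real.tendsto_cocompact_of_tendsto_atBot_atTop {u : ℝ → ℝ}
    (hbot : Tendsto u atBot atBot) (htop : Tendsto u atTop atTop) :
    Tendsto u (cocompact ℝ) (cocompact ℝ) := by
  rw [cocompact_eq_atBot_atTop, tendsto_sup]
  exact ⟨hbot.mono_right le_sup_left, htop.mono_right le_sup_right⟩

section ChangeOfVariables

variable {E : Type*} [NormedAddCommGroup E] [NormedSpace ℝ E]

theorem tendsto_intervalIntegral_atBot {φ : ℝ → E} (hφ : Integrable φ) (a : ℝ) :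
    Tendsto (fun x => ∫ t in a..x, φ t) atBot (nhds (-∫ t in Set.Iic a, φ t)) := by
  refine (intervalIntegral_tendsto_integral_Iic a hφ.integrableOn tendsto_id).neg.congr ?_
  exact fun x => (intervalIntegral.integral_symm x a).symm

theorem integral_comp_smul_deriv_of_tendsto_atBot_atTop [CompleteSpace E] {φ : ℝ → E}
    {u u' : ℝ → ℝ} (hφ : Continuous φ) (hφi : Integrable φ) (hu : ∀ x, HasDerivAt u (u' x) x)
    (hint : Integrable fun x => u' x • φ (u x))
    (hbot : Tendsto u atBot atBot) (htop : Tendsto u atTop atTop) :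
    ∫ x, u' x • φ (u x) = ∫ x, φ x := by
  set F : ℝ → E := fun x => ∫ t in (0 : ℝ)..x, φ t
  have hF : ∀ x, HasDerivAt (F ∘ u) (u' x • φ (u x)) x := fun x =>
    ((hφ.integral_hasStrictDerivAt 0 (u x)).hasDerivAt).scomp x (hu x)
  rw [integral_of_hasDerivAt_of_tendsto hF hint
    ((tendsto_intervalIntegral_atBot hφi 0).comp hbot)
    ((intervalIntegral_tendsto_integral_Ioi 0 hφi.integrableOn tendsto_id).comp htop),
    sub_neg_eq_add, add_comm, intervalIntegral.integral_Iic_add_Ioi hφi.integrableOn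
    hφi.integrableOn]

end ChangeOfVariables

/-- Change of variables `s = y + g(y)` for a compactly supported continuous test
function: `∫ φ(y + g(y))(1 + g′(y)) dy = ∫ φ(s) ds`. -/
theorem change_of_variables_identity
    (g : ℝ → ℝ) (hg : ContDiff ℝ 1 g)
    (hg0 : Tendsto g (cocompact ℝ) (nhds 0))
    (φ : ℝ → ℝ) (hφ : Continuous φ) (hφc : HasCompactSupport φ) :
    ∫ y : ℝ, φ (y + g y) * (1 + deriv g y) = ∫ s : ℝ, φ s := by
  have hbot : Tendsto (fun y => y + g y) atBot atBot :=
    tendsto_id.atBot_add (hg0.mono_left atBot_le_cocompact)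
  have htop : Tendsto (fun y => y + g y) atTop atTop :=
    tendsto_id.atTop_add (hg0.mono_left atTop_le_cocompact)
  have hderiv : ∀ y, HasDerivAt (fun y => y + g y) (1 + deriv g y) y := fun y =>
    (hasDerivAt_id y).add (hg.differentiable one_ne_zero y).hasDerivAt
  have hsupp : HasCompactSupport fun y => (1 + deriv g y) • φ (y + g y) :=
    HasCompactSupport.smul_left (f := fun y => 1 + deriv g y)
      (hφc.comp_of_tendsto_cocompact (Real.tendsto_cocompact_of_tendsto_atBot_atTop hbot htop))
  have hcont : Continuous fun y => (1 + deriv g y) • φ (y + g y) := by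
    have hg' := hg.continuous_deriv le_rfl
    have hg_cont := hg.continuous
    fun_prop
  simp_rw [mul_comm (φ _), ← smul_eq_mul]
  exact integral_comp_smul_deriv_of_tendsto_atBot_atTop hφ
    (hφ.integrable_of_hasCompactSupport hφc) hderiv
    (hcont.integrable_of_hasCompactSupport hsupp) hbot htop
end

section
/- Let V ⊆ ℝ² be an open set and let v_0, v_1, v_2 : V → ℝ be differentiable functions each satisfying the inviscid Burgers–Hopf equation ∂_t v_k + ∂_x (v_k²) = 0 on V (k = 0, 1, 2). If the function u := v_0 − v_1 + v_2 also satisfies ∂_t u + ∂_x (u²) = 0 on V, then ∂_x [ (v_1 − v_0)(v_1 − v_2) ] = 0 at every point of V. -/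
/-! Differentiating the identity `(v₀ − v₁ + v₂)² − v₀² + v₁² − v₂² = 2 (v₁ − v₀)(v₁ − v₂)` in `x`
and substituting the four Burgers equations turns `2 ∂ₓ[(v₁ − v₀)(v₁ − v₂)]` into
`−∂ₜ(v₀ − v₁ + v₂) + ∂ₜv₀ − ∂ₜv₁ + ∂ₜv₂`, which vanishes because `∂ₜ` is linear. -/

theorem alternating_sum_sq_sub_sq {R : Type*} [CommRing R] (a b c : R) :
    (a - b + c) ^ 2 - a ^ 2 + b ^ 2 - c ^ 2 = 2 * ((b - a) * (b - c)) := by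
  ring

section

variable {𝕜 : Type*} [NontriviallyNormedField 𝕜] {f g h : 𝕜 → 𝕜} {x : 𝕜}

theorem deriv_alternating_sum (hf : DifferentiableAt 𝕜 f x) (hg : DifferentiableAt 𝕜 g x)
    (hh : DifferentiableAt 𝕜 h x) :
    deriv (fun y => f y - g y + h y) x = deriv f x - deriv g x + deriv h x := by
  rw [deriv_fun_add (hf.fun_sub hg) hh, deriv_fun_sub hf hg]

theorem two_mul_deriv_mul_sub_sub (hf : DifferentiableAt 𝕜 f x)
    (hg : DifferentiableAt 𝕜 g x) (hh : DifferentiableAt 𝕜 h x) :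
    2 * deriv (fun y => (g y - f y) * (g y - h y)) x =
      deriv (fun y => (f y - g y + h y) ^ 2) x - deriv (fun y => f y ^ 2) x
        + deriv (fun y => g y ^ 2) x - deriv (fun y => h y ^ 2) x := by
  have hu : DifferentiableAt 𝕜 (fun y => (f y - g y + h y) ^ 2) x :=
    ((hf.fun_sub hg).fun_add hh).fun_pow 2
  rw [← deriv_const_mul_field]
  simp only [← alternating_sum_sq_sub_sq]
  rw [deriv_fun_sub ((hu.fun_sub (hf.fun_pow 2)).fun_add (hg.fun_pow 2)) (hh.fun_pow 2),
    deriv_fun_add (hu.fun_sub (hf.fun_pow 2)) (hg.fun_pow 2), deriv_fun_sub hu (hf.fun_pow 2)]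

end

theorem alternating_sum_burgers_constraint_general
    (V : Set (ℝ × ℝ))
    (v₀ v₁ v₂ : ℝ → ℝ → ℝ)
    (hdiff₀ : ∀ p ∈ V, DifferentiableAt ℝ (fun t => v₀ t p.2) p.1 ∧
        DifferentiableAt ℝ (fun x => v₀ p.1 x) p.2)
    (hdiff₁ : ∀ p ∈ V, DifferentiableAt ℝ (fun t => v₁ t p.2) p.1 ∧
        DifferentiableAt ℝ (fun x => v₁ p.1 x) p.2)
    (hdiff₂ : ∀ p ∈ V, DifferentiableAt ℝ (fun t => v₂ t p.2) p.1 ∧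
        DifferentiableAt ℝ (fun x => v₂ p.1 x) p.2)
    (hB₀ : ∀ p ∈ V, deriv (fun t => v₀ t p.2) p.1
        + deriv (fun x => (v₀ p.1 x) ^ 2) p.2 = 0)
    (hB₁ : ∀ p ∈ V, deriv (fun t => v₁ t p.2) p.1
        + deriv (fun x => (v₁ p.1 x) ^ 2) p.2 = 0)
    (hB₂ : ∀ p ∈ V, deriv (fun t => v₂ t p.2) p.1
        + deriv (fun x => (v₂ p.1 x) ^ 2) p.2 = 0)
    (hBu : ∀ p ∈ V, deriv (fun t => v₀ t p.2 - v₁ t p.2 + v₂ t p.2) p.1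
        + deriv (fun x => (v₀ p.1 x - v₁ p.1 x + v₂ p.1 x) ^ 2) p.2 = 0) :
    ∀ p ∈ V, deriv (fun x => (v₁ p.1 x - v₀ p.1 x) * (v₁ p.1 x - v₂ p.1 x)) p.2 = 0 := by
  intro p hp
  obtain ⟨ht₀, hx₀⟩ := hdiff₀ p hp
  obtain ⟨ht₁, hx₁⟩ := hdiff₁ p hp
  obtain ⟨ht₂, hx₂⟩ := hdiff₂ p hp
  have hu := hBu p hp
  rw [deriv_alternating_sum ht₀ ht₁ ht₂] at hu
  linarith [two_mul_deriv_mul_sub_sub hx₀ hx₁ hx₂, hB₀ p hp, hB₁ p hp, hB₂ p hp]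

/-- If `v₀, v₁, v₂` and their alternating sum `u = v₀ − v₁ + v₂` all solve the inviscid
Burgers–Hopf equation `∂_t v + ∂_x (v²) = 0` on an open set `V ⊆ ℝ²`, then
`∂_x [(v₁ − v₀)(v₁ − v₂)] = 0` on `V`. -/
theorem alternating_sum_burgers_constraint
    (V : Set (ℝ × ℝ)) (hV : IsOpen V)
    (v₀ v₁ v₂ : ℝ → ℝ → ℝ)
    (hdiff₀ : ∀ p ∈ V, DifferentiableAt ℝ (fun t => v₀ t p.2) p.1 ∧
        DifferentiableAt ℝ (fun x => v₀ p.1 x) p.2)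
    (hdiff₁ : ∀ p ∈ V, DifferentiableAt ℝ (fun t => v₁ t p.2) p.1 ∧
        DifferentiableAt ℝ (fun x => v₁ p.1 x) p.2)
    (hdiff₂ : ∀ p ∈ V, DifferentiableAt ℝ (fun t => v₂ t p.2) p.1 ∧
        DifferentiableAt ℝ (fun x => v₂ p.1 x) p.2)
    (hB₀ : ∀ p ∈ V, deriv (fun t => v₀ t p.2) p.1
        + deriv (fun x => (v₀ p.1 x) ^ 2) p.2 = 0)
    (hB₁ : ∀ p ∈ V, deriv (fun t => v₁ t p.2) p.1
        + deriv (fun x => (v₁ p.1 x) ^ 2) p.2 = 0)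
    (hB₂ : ∀ p ∈ V, deriv (fun t => v₂ t p.2) p.1
        + deriv (fun x => (v₂ p.1 x) ^ 2) p.2 = 0)
    (hBu : ∀ p ∈ V, deriv (fun t => v₀ t p.2 - v₁ t p.2 + v₂ t p.2) p.1
        + deriv (fun x => (v₀ p.1 x - v₁ p.1 x + v₂ p.1 x) ^ 2) p.2 = 0) :
    ∀ p ∈ V, deriv (fun x => (v₁ p.1 x - v₀ p.1 x) * (v₁ p.1 x - v₂ p.1 x)) p.2 = 0 :=
  alternating_sum_burgers_constraint_general V v₀ v₁ v₂ hdiff₀ hdiff₁ hdiff₂ hB₀ hB₁ hB₂ hBu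
end

section
/- Let a ∈ ℝ and let x ∈ ℂ with Im(x) > 0. Let f : (0,∞) → ℂ be measurable and square-integrable, and define h(ξ) := i ∫_ξ^∞ f(η) · exp( i a (η² − ξ²) + i x (η − ξ) ) dη for ξ > 0. Then h is square-integrable on (0,∞) and ∫_0^∞ |h(ξ)|² dξ ≤ (Im x)^{−2} ∫_0^∞ |f(η)|² dη. -/
open MeasureTheory Set ProbabilityTheory
open scoped ENNReal

/-! With `b = Im x`, the kernel has modulus `e^{-b(η-ξ)}` on `η > ξ`, which is `b⁻¹` times the
exponential density `p` of rate `b` at `η - ξ`. So `|h(ξ)| ≤ b⁻¹ ∫ p(η - ξ) |f(η)| dη`, and the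
Schur test (Cauchy–Schwarz against the kernel, then Tonelli) bounds the `L²` norm of the right-hand
side by the geometric mean of the row and column masses of `p(η - ξ)`, both equal to `1`. -/

section

variable {α β : Type*} [MeasurableSpace α] [MeasurableSpace β]

theorem lintegral_mul_sq_le {μ : Measure α} {k g : α → ℝ≥0∞}
    (hk : AEMeasurable k μ) (hg : AEMeasurable g μ) :
    (∫⁻ y, k y * g y ∂μ) ^ 2 ≤ (∫⁻ y, k y ∂μ) * ∫⁻ y, k y * g y ^ 2 ∂μ := by
  have holder := ENNReal.lintegral_mul_norm_pow_le (g := fun y => k y * g y ^ 2) hk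
    (hk.mul (hg.pow_const 2)) (p := 2⁻¹) (q := 2⁻¹) (by norm_num) (by norm_num) (by norm_num)
  have hsqrt : ∀ y, k y ^ (2⁻¹ : ℝ) * (k y * g y ^ 2) ^ (2⁻¹ : ℝ) = k y * g y := by
    intro y
    rw [← ENNReal.mul_rpow_of_nonneg _ _ (by norm_num), ← mul_assoc, ← sq, ← mul_pow,
      ← ENNReal.rpow_two, ← ENNReal.rpow_mul]
    norm_num
  simp only [hsqrt] at holder
  calc (∫⁻ y, k y * g y ∂μ) ^ 2
      ≤ ((∫⁻ y, k y ∂μ) ^ (2⁻¹ : ℝ) * (∫⁻ y, k y * g y ^ 2 ∂μ) ^ (2⁻¹ : ℝ)) ^ 2 := by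
        gcongr
    _ = (∫⁻ y, k y ∂μ) * ∫⁻ y, k y * g y ^ 2 ∂μ := by
        rw [← ENNReal.mul_rpow_of_nonneg _ _ (by norm_num), ← ENNReal.rpow_two,
          ← ENNReal.rpow_mul]
        norm_num

theorem lintegral_sq_lintegral_mul_le {μ : Measure α} {ν : Measure β} [SFinite μ] [SFinite ν]
    {k : α → β → ℝ≥0∞} {g : β → ℝ≥0∞} (hk : Measurable (Function.uncurry k))
    (hg : Measurable g) {A B : ℝ≥0∞} (hA : ∀ x, ∫⁻ y, k x y ∂ν ≤ A)
    (hB : ∀ y, ∫⁻ x, k x y ∂μ ≤ B) :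
    ∫⁻ x, (∫⁻ y, k x y * g y ∂ν) ^ 2 ∂μ ≤ A * B * ∫⁻ y, g y ^ 2 ∂ν := by
  have hkg : Measurable fun p : α × β => k p.1 p.2 * g p.2 ^ 2 :=
    hk.mul ((hg.pow_const 2).comp measurable_snd)
  calc ∫⁻ x, (∫⁻ y, k x y * g y ∂ν) ^ 2 ∂μ
      ≤ ∫⁻ x, A * ∫⁻ y, k x y * g y ^ 2 ∂ν ∂μ := lintegral_mono fun x =>
        (lintegral_mul_sq_le hk.of_uncurry_left.aemeasurable hg.aemeasurable).trans
          (mul_le_mul_left (hA x) _)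
    _ = A * ∫⁻ y, g y ^ 2 * ∫⁻ x, k x y ∂μ ∂ν := by
        rw [lintegral_const_mul _ hkg.lintegral_prod_right', lintegral_lintegral_swap
          hkg.aemeasurable]
        congr 1
        refine lintegral_congr fun y => ?_
        rw [← lintegral_const_mul _ hk.of_uncurry_right]
        simp only [mul_comm]
    _ ≤ A * ∫⁻ y, g y ^ 2 * B ∂ν := by gcongr with y; exact hB y
    _ = A * B * ∫⁻ y, g y ^ 2 ∂ν := by
        rw [lintegral_mul_const _ (hg.pow_const 2), mul_assoc, mul_comm B]

theorem integrable_sq_norm_and_integral_le {E F : Type*} [NormedAddCommGroup E]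
    [NormedAddCommGroup F] {μ : Measure α} {ν : Measure β} {u : α → E} {v : β → F}
    (hu : AEStronglyMeasurable u μ) (hv : Integrable (fun y => ‖v y‖ ^ 2) ν) {C : ℝ}
    (hC : 0 ≤ C) (h : ∫⁻ x, ‖u x‖ₑ ^ 2 ∂μ ≤ ENNReal.ofReal C * ∫⁻ y, ‖v y‖ₑ ^ 2 ∂ν) :
    Integrable (fun x => ‖u x‖ ^ 2) μ ∧ ∫ x, ‖u x‖ ^ 2 ∂μ ≤ C * ∫ y, ‖v y‖ ^ 2 ∂ν := by
  have hv_fin : ∫⁻ y, ‖v y‖ₑ ^ 2 ∂ν ≠ ⊤ := by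
    simpa [HasFiniteIntegral] using hv.2.ne
  have hu_fin : ∫⁻ x, ‖u x‖ₑ ^ 2 ∂μ ≠ ⊤ :=
    ne_top_of_le_ne_top (ENNReal.mul_ne_top ENNReal.ofReal_ne_top hv_fin) h
  have hu_int : Integrable (fun x => ‖u x‖ ^ 2) μ :=
    ⟨hu.norm.pow 2, by simpa [HasFiniteIntegral] using hu_fin.lt_top⟩
  have hu_eq : ∫ x, ‖u x‖ ^ 2 ∂μ = (∫⁻ x, ‖u x‖ₑ ^ 2 ∂μ).toReal := by
    simpa using integral_norm_eq_lintegral_enorm hu_int.1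
  have hv_eq : ∫ y, ‖v y‖ ^ 2 ∂ν = (∫⁻ y, ‖v y‖ₑ ^ 2 ∂ν).toReal := by
    simpa using integral_norm_eq_lintegral_enorm hv.1
  refine ⟨hu_int, ?_⟩
  rw [hu_eq, hv_eq, ← ENNReal.toReal_ofReal hC, ← ENNReal.toReal_mul]
  exact ENNReal.toReal_mono (ENNReal.mul_ne_top ENNReal.ofReal_ne_top hv_fin) h

end

theorem lintegral_exponentialPDF_sub_right {b : ℝ} (hb : 0 < b) (ξ : ℝ) :
    ∫⁻ η, exponentialPDF b (η - ξ) = 1 := by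
  rw [lintegral_sub_right_eq_self (exponentialPDF b), lintegral_exponentialPDF_eq_one hb]

theorem lintegral_exponentialPDF_sub_left {b : ℝ} (hb : 0 < b) (η : ℝ) :
    ∫⁻ ξ, exponentialPDF b (η - ξ) = 1 := by
  rw [lintegral_sub_left_eq_self (exponentialPDF b), lintegral_exponentialPDF_eq_one hb]

theorem lintegral_sq_lintegral_exponentialPDF_mul_le {b : ℝ} (hb : 0 < b) {g : ℝ → ℝ≥0∞}
    (hg : Measurable g) :
    ∫⁻ ξ in Ioi 0, (∫⁻ η in Ioi 0, exponentialPDF b (η - ξ) * g η) ^ 2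
      ≤ ∫⁻ η in Ioi 0, g η ^ 2 := by
  simpa using lintegral_sq_lintegral_mul_le (k := fun ξ η => exponentialPDF b (η - ξ))
    ((measurable_exponentialPDFReal b).ennreal_ofReal.comp (measurable_snd.sub measurable_fst))
    hg (fun ξ => (setLIntegral_le_lintegral _ _).trans (lintegral_exponentialPDF_sub_right hb ξ).le)
    (fun η => (setLIntegral_le_lintegral _ _).trans (lintegral_exponentialPDF_sub_left hb η).le)

theorem stronglyMeasurable_setIntegral_Ioi {E : Type*} [NormedAddCommGroup E] [NormedSpace ℝ E]
    {ν : Measure ℝ} [SFinite ν] {F : ℝ → ℝ → E}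
    (hF : StronglyMeasurable (Function.uncurry F)) :
    StronglyMeasurable fun ξ => ∫ η in Ioi ξ, F ξ η ∂ν := by
  simp_rw [← integral_indicator measurableSet_Ioi]
  exact (hF.indicator (measurableSet_lt measurable_fst measurable_snd)).integral_prod_right'

theorem norm_cexp_phase (a : ℝ) (x : ℂ) (ξ η : ℝ) :
    ‖Complex.exp (Complex.I * (a : ℂ) * ((η : ℂ) ^ 2 - (ξ : ℂ) ^ 2)
      + Complex.I * x * ((η : ℂ) - (ξ : ℂ)))‖ = Real.exp (-(x.im * (η - ξ))) := by
  rw [Complex.norm_exp]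
  congr 1
  simp [Complex.mul_re, Complex.mul_im, pow_two]

theorem enorm_setIntegral_Ioi_mul_cexp_phase_le (a : ℝ) {x : ℂ} (hx : 0 < x.im) (f : ℝ → ℂ)
    {ξ : ℝ} (hξ : 0 ≤ ξ) :
    ‖∫ η in Ioi ξ, f η * Complex.exp (Complex.I * (a : ℂ) * ((η : ℂ) ^ 2 - (ξ : ℂ) ^ 2)
      + Complex.I * x * ((η : ℂ) - (ξ : ℂ)))‖ₑ
      ≤ ENNReal.ofReal x.im⁻¹ * ∫⁻ η in Ioi 0, exponentialPDF x.im (η - ξ) * ‖f η‖ₑ := by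
  calc _ ≤ ∫⁻ η in Ioi ξ, ‖f η * Complex.exp (Complex.I * (a : ℂ) * ((η : ℂ) ^ 2 - (ξ : ℂ) ^ 2)
        + Complex.I * x * ((η : ℂ) - (ξ : ℂ)))‖ₑ := enorm_integral_le_lintegral_enorm _
    _ = ∫⁻ η in Ioi ξ, ENNReal.ofReal x.im⁻¹ * (exponentialPDF x.im (η - ξ) * ‖f η‖ₑ) := by
        refine setLIntegral_congr_fun measurableSet_Ioi fun η hη => ?_
        rw [exponentialPDF_of_nonneg (sub_nonneg.2 (le_of_lt hη)), enorm_mul,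
          ← ofReal_norm (Complex.exp _), norm_cexp_phase, ← mul_assoc,
          ← ENNReal.ofReal_mul (inv_nonneg.2 hx.le), inv_mul_cancel_left₀ hx.ne', mul_comm]
    _ = ENNReal.ofReal x.im⁻¹ * ∫⁻ η in Ioi ξ, exponentialPDF x.im (η - ξ) * ‖f η‖ₑ :=
        lintegral_const_mul' _ _ ENNReal.ofReal_ne_top
    _ ≤ _ := by gcongr

/-- The integral operator `f ↦ h`, with
`h(ξ) = i ∫_ξ^∞ f(η) e^{ia(η²−ξ²)+ix(η−ξ)} dη`, is bounded on `L²(0,∞)` with norm at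
most `(Im x)⁻¹` when `Im x > 0`. -/
theorem integral_operator_L2_bound
    (a : ℝ) (x : ℂ) (hx : 0 < x.im)
    (f : ℝ → ℂ) (hf : Measurable f)
    (hf2 : IntegrableOn (fun η => ‖f η‖ ^ 2) (Set.Ioi 0))
    (h : ℝ → ℂ)
    (hh : ∀ ξ : ℝ, 0 < ξ →
      h ξ = Complex.I * ∫ η in Set.Ioi ξ,
        f η * Complex.exp (Complex.I * (a : ℂ) * ((η : ℂ) ^ 2 - (ξ : ℂ) ^ 2)
          + Complex.I * x * ((η : ℂ) - (ξ : ℂ)))) :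
    IntegrableOn (fun ξ => ‖h ξ‖ ^ 2) (Set.Ioi 0) ∧
    (∫ ξ in Set.Ioi (0 : ℝ), ‖h ξ‖ ^ 2)
      ≤ (x.im) ⁻¹ ^ 2 * ∫ η in Set.Ioi (0 : ℝ), ‖f η‖ ^ 2 := by
  have h_meas : AEStronglyMeasurable h (volume.restrict (Ioi 0)) := by
    refine ((stronglyMeasurable_setIntegral_Ioi ?_).const_mul Complex.I).aestronglyMeasurable.congr
      ((ae_restrict_iff' measurableSet_Ioi).2 (.of_forall fun ξ hξ => (hh ξ hξ).symm))
    exact ((hf.comp measurable_snd).mul (by fun_prop)).stronglyMeasurable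
  have h_pointwise : ∀ ξ ∈ Ioi (0 : ℝ), ‖h ξ‖ₑ ^ 2 ≤ ENNReal.ofReal x.im⁻¹ ^ 2 *
      (∫⁻ η in Ioi 0, exponentialPDF x.im (η - ξ) * ‖f η‖ₑ) ^ 2 := fun ξ hξ => by
    rw [hh ξ hξ, enorm_mul, ← ofReal_norm Complex.I, Complex.norm_I, ENNReal.ofReal_one,
      one_mul, ← mul_pow]
    gcongr
    exact enorm_setIntegral_Ioi_mul_cexp_phase_le a hx f hξ.le
  refine integrable_sq_norm_and_integral_le h_meas hf2 (by positivity) ?_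
  calc ∫⁻ ξ in Ioi 0, ‖h ξ‖ₑ ^ 2
      ≤ ∫⁻ ξ in Ioi 0, ENNReal.ofReal x.im⁻¹ ^ 2 *
          (∫⁻ η in Ioi 0, exponentialPDF x.im (η - ξ) * ‖f η‖ₑ) ^ 2 :=
        setLIntegral_mono' measurableSet_Ioi h_pointwise
    _ ≤ ENNReal.ofReal (x.im⁻¹ ^ 2) * ∫⁻ η in Ioi 0, ‖f η‖ₑ ^ 2 := by
        rw [lintegral_const_mul' _ _ (by simp), ENNReal.ofReal_pow (inv_nonneg.2 hx.le)]
        gcongr _ * ?_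
        exact lintegral_sq_lintegral_exponentialPDF_mul_le hx hf.enorm
end

section
/- Let N ≥ 1, let Q be a monic squarefree complex polynomial of degree 2N, let P be a complex polynomial of degree at most 2N − 1, and let t ∈ ℂ. Then the set of complex numbers x for which the polynomial R_x(y) = (y − x)·Q(y) + 2t·P(y) has a multiple root (i.e. is not squarefree) is finite. -/
/-!
A double root `y` of `R_x = A - x Q`, where `A = X Q + 2t P`, is a root of the Wronskian
`Q R_x' - Q' R_x`, which does not depend on `x`: it equals `W(Q, A) = Q² + 2t W(Q, P)`, and this is
nonzero because `deg W(Q, P) < deg Q + deg P ≤ 2 deg Q`. So `y` ranges over the finitely many roots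
of `W(Q, A)`, and each such `y` determines `x`, since `Q` and `Q'` have no common root.
-/

open Polynomial

namespace Polynomial

variable {R : Type*} [CommRing R]

theorem wronskian_sub_C_mul_self (Q A : R[X]) (x : R) :
    wronskian Q (A - C x * Q) = wronskian Q A := by
  simp only [wronskian, derivative_sub, derivative_C_mul]
  ring

theorem wronskian_X_mul_self (Q : R[X]) : wronskian Q (X * Q) = Q ^ 2 := by
  simp only [wronskian, derivative_mul, derivative_X]
  ring

theorem isRoot_wronskian_of_isRoot_of_isRoot_derivative {Q A : R[X]} {y : R}
    (hA : A.IsRoot y) (hA' : (derivative A).IsRoot y) : (wronskian Q A).IsRoot y := by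
  simp_all [wronskian]

variable [IsDomain R]

theorem wronskian_X_mul_add_C_mul_ne_zero {Q P : R[X]} (hQ : Q ≠ 0) (hPQ : P.degree ≤ Q.degree)
    (c : R) : wronskian Q (X * Q + C c * P) ≠ 0 := by
  have hsmall : (wronskian Q (c • P)).degree < (Q ^ 2).degree := by
    rcases eq_or_ne P 0 with rfl | hP
    · rw [smul_zero, wronskian_zero_right, degree_zero, bot_lt_iff_ne_bot, degree_ne_bot]
      exact pow_ne_zero 2 hQ
    calc (wronskian Q (c • P)).degree
        = (c • wronskian Q P).degree := by rw [← wronskianBilin_apply, map_smul, wronskianBilin_apply]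
      _ ≤ (wronskian Q P).degree := degree_smul_le c _
      _ < Q.degree + P.degree := degree_wronskian_lt_add hQ hP
      _ ≤ Q.degree + Q.degree := add_le_add_right hPQ _
      _ = (Q ^ 2).degree := by rw [degree_pow, two_nsmul]
  rw [wronskian_add_right, wronskian_X_mul_self, C_mul', ← degree_ne_bot,
    degree_add_eq_left_of_degree_lt hsmall, degree_ne_bot]
  exact pow_ne_zero 2 hQ

theorem subsingleton_setOf_isRoot_sub_C_mul {A Q : R[X]} {y : R}
    (hy : Q.eval y ≠ 0 ∨ (derivative Q).eval y ≠ 0) :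
    {x : R | (A - C x * Q).IsRoot y ∧ (derivative (A - C x * Q)).IsRoot y}.Subsingleton := by
  rintro x₁ ⟨h₁, h₁'⟩ x₂ ⟨h₂, h₂'⟩
  simp only [IsRoot, derivative_sub, derivative_C_mul, eval_sub, eval_mul, eval_C] at h₁ h₁' h₂ h₂'
  rcases hy with hy | hy
  · exact mul_right_cancel₀ hy (by linear_combination h₂ - h₁)
  · exact mul_right_cancel₀ hy (by linear_combination h₂' - h₁')

theorem finite_setOf_exists_isRoot_derivative_sub_C_mul {A Q : R[X]} (hQ : Q.Separable)
    (hW : wronskian Q A ≠ 0) :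
    {x : R | ∃ y, (A - C x * Q).IsRoot y ∧ (derivative (A - C x * Q)).IsRoot y}.Finite := by
  refine ((finite_setOfPred_isRoot hW).biUnion fun y _ =>
    (subsingleton_setOf_isRoot_sub_C_mul (A := A) (Q := Q) (y := y) ?_).finite).subset ?_
  · simpa using aeval_ne_zero_of_isCoprime hQ y
  · rintro x ⟨y, hy, hy'⟩
    have hWy := isRoot_wronskian_of_isRoot_of_isRoot_derivative (Q := Q) hy hy'
    rw [wronskian_sub_C_mul_self] at hWy
    exact Set.mem_biUnion hWy ⟨hy, hy'⟩

theorem exists_isRoot_derivative_of_not_squarefree {K : Type*} [Field K] [IsAlgClosed K]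
    {p : K[X]} (hp : ¬Squarefree p) : ∃ y, p.IsRoot y ∧ (derivative p).IsRoot y := by
  rw [← PerfectField.separable_iff_squarefree, Separable,
    isCoprime_iff_aeval_ne_zero_of_isAlgClosed K K] at hp
  push Not at hp
  simpa using hp

end Polynomial

theorem not_squarefree_set_finite_general (N : ℕ)
    (Q P : Polynomial ℂ) (hQsf : Squarefree Q)
    (hQdeg : Q.natDegree = 2 * N) (hPdeg : P.degree ≤ (2 * N - 1 : ℕ))
    (t : ℂ) :
    {x : ℂ | ¬ Squarefree ((X - C x) * Q + C (2 * t) * P)}.Finite := by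
  have hQ : Q ≠ 0 := hQsf.ne_zero
  have hPQ : P.degree ≤ Q.degree := by
    rw [degree_eq_natDegree hQ, hQdeg]
    exact hPdeg.trans (by exact_mod_cast Nat.sub_le _ _)
  refine (finite_setOf_exists_isRoot_derivative_sub_C_mul
    (PerfectField.separable_iff_squarefree.mpr hQsf)
    (wronskian_X_mul_add_C_mul_ne_zero hQ hPQ (2 * t))).subset fun x hx => ?_
  have hR : (X - C x) * Q + C (2 * t) * P = X * Q + C (2 * t) * P - C x * Q := by ring
  rw [Set.mem_ofPred_eq, hR] at hx
  exact exists_isRoot_derivative_of_not_squarefree hx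

/-- For `Q` monic squarefree of degree `2N`, `P` of degree `≤ 2N − 1`, and `t ∈ ℂ`, the
set of `x ∈ ℂ` for which `R_x(y) = (y − x)Q(y) + 2tP(y)` is not squarefree is finite. -/
theorem not_squarefree_set_finite (N : ℕ) (hN : 1 ≤ N)
    (Q P : Polynomial ℂ) (hQmonic : Q.Monic) (hQsf : Squarefree Q)
    (hQdeg : Q.natDegree = 2 * N) (hPdeg : P.degree ≤ (2 * N - 1 : ℕ))
    (t : ℂ) :
    {x : ℂ | ¬ Squarefree ((X - C x) * Q + C (2 * t) * P)}.Finite :=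
  not_squarefree_set_finite_general N Q P hQsf hQdeg hPdeg t
end
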